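/- arXiv:2107.01316 — 7 statements merged into one kernel-verified Lean document; each statement's English description precedes it below -/
import Mathlib

section
/- Let m, n be nonnegative integers with n ≡ 2^{m+1} (mod 2^{m+2}) and n > 0. Then r_m(n) = r_m(n - 2^{m+1}) + Σ_{j=0}^{⌊m/2⌋} C(m+1, 2j+1) · r_m((n - (2j+1)·2^{m+1})/2). -/
/-!
A part `2 ^ i` with `i ≤ m` occurs a multiple of `2 ^ (m + 1 - i)` times, so it contributes a
multiple of `2 ^ (m + 1)`. Dividing out, `r m (2 ^ (m + 1) * z)` counts binary partitions of `z`
whose parts `1` come in `m + 2` colours (one per small part `2 ^ i`, one for `2 ^ (m + 1)`).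
For odd `z`, such a partition either contains a `1` of the last colour, which can be removed, or
it does not; then the set `T` of colours occurring an odd number of times has odd size, and
removing one `1` of each colour in `T` and halving everything gives a coloured partition of
`(z - #T) / 2`. Counting the sets `T` by their size gives the binomial coefficients.
-/

/-- The integer partitioned by the binary partition `α`, where `α i` is the
number of parts equal to `2 ^ i` (so `α i` is the `α_{i+1}` of the paper). -/
def binWeight (α : ℕ →₀ ℕ) : ℕ := α.sum fun i a => a * 2 ^ i

/-- `Pm m n` is the set of binary partitions of `n` satisfying the divisibility
conditions `2 ^ (m + 2 - i) ∣ α_i` for `1 ≤ i ≤ m + 1` (written here with the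
index shifted down by one).  For `n < 0` the set is empty. -/
def Pm (m : ℕ) (n : ℤ) : Set (ℕ →₀ ℕ) :=
  {α | (binWeight α : ℤ) = n ∧ ∀ i ≤ m, 2 ^ (m + 1 - i) ∣ α i}

/-- `r m n` is the number of binary partitions of `n` satisfying the divisibility
conditions `2 ^ (m + 2 - i) ∣ α_i` for `1 ≤ i ≤ m + 1`. -/
noncomputable def r (m : ℕ) (n : ℤ) : ℕ := Nat.card (Pm m n)

open Finset

lemma binWeight_eq_weight : binWeight = ⇑(Finsupp.weight fun i => 2 ^ i) := by
  funext α
  simp only [binWeight, Finsupp.weight_apply, smul_eq_mul]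

lemma binWeight_add (α β : ℕ →₀ ℕ) : binWeight (α + β) = binWeight α + binWeight β := by
  simp only [binWeight_eq_weight, map_add]

lemma binWeight_single (i c : ℕ) : binWeight (Finsupp.single i c) = c * 2 ^ i :=
  Finsupp.sum_single_index (zero_mul _)

lemma binWeight_embDomain_addRight (k : ℕ) (γ : ℕ →₀ ℕ) :
    binWeight (γ.embDomain (addRightEmbedding k)) = 2 ^ k * binWeight γ := by
  simp only [binWeight, Finsupp.sum_embDomain, Finsupp.mul_sum, addRightEmbedding_apply, pow_add]
  exact Finsupp.sum_congr fun i _ => by ring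

lemma two_pow_le_binWeight {γ : ℕ →₀ ℕ} {i : ℕ} (hi : γ i ≠ 0) : 2 ^ i ≤ binWeight γ := by
  rw [binWeight_eq_weight]
  exact Finsupp.le_weight_of_ne_zero' _ hi

lemma apply_le_binWeight (γ : ℕ →₀ ℕ) (i : ℕ) : γ i ≤ binWeight γ := by
  rw [binWeight_eq_weight]
  exact Finsupp.le_weight _ (by positivity) γ

lemma finite_setOf_binWeight_le (k : ℕ) : {γ : ℕ →₀ ℕ | binWeight γ ≤ k}.Finite := by
  refine (Set.finite_Iic (∑ i ∈ range (k + 1), Finsupp.single i k)).subset fun γ hγ i => ?_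
  simp only [Finsupp.finsetSum_apply, Finsupp.single_apply, sum_ite_eq', mem_range]
  rcases eq_or_ne (γ i) 0 with h | h
  · simp [h]
  · have : 2 ^ i ≤ k := (two_pow_le_binWeight h).trans hγ
    have : i < 2 ^ i := Nat.lt_two_pow_self
    rw [if_pos (by omega)]
    exact (apply_le_binWeight γ i).trans hγ

/-- Binary partitions of `z` whose parts equal to `1` come in `Fintype.card ι + 1` colours:
`p.1 i` counts the ones of colour `i` and `p.2 0` those of the remaining colour. -/
def coloredPartitions (ι : Type*) [Fintype ι] (z : ℤ) : Set ((ι → ℕ) × (ℕ →₀ ℕ)) :=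
  {p | ((∑ i, p.1 i + binWeight p.2 : ℕ) : ℤ) = z}

noncomputable def numColoredPartitions (ι : Type*) [Fintype ι] (z : ℤ) : ℕ :=
  Nat.card (coloredPartitions ι z)

instance instFiniteColoredPartitions (ι : Type*) [Fintype ι] (z : ℤ) :
    Finite (coloredPartitions ι z) := by
  classical
  refine Set.Finite.to_subtype <| ((Set.finite_Iic fun _ => z.toNat).prod
    (finite_setOf_binWeight_le z.toNat)).subset ?_
  rintro ⟨β, γ⟩ (hp : ((∑ i, β i + binWeight γ : ℕ) : ℤ) = z)
  refine ⟨fun i => ?_, ?_⟩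
  · have := single_le_sum (fun j _ => Nat.zero_le (β j)) (mem_univ i)
    show β i ≤ z.toNat
    omega
  · show binWeight γ ≤ z.toNat
    omega

section Rescaling

variable {m : ℕ}

noncomputable def ofColored (m : ℕ) (p : (Fin (m + 1) → ℕ) × (ℕ →₀ ℕ)) : ℕ →₀ ℕ :=
  ∑ i : Fin (m + 1), Finsupp.single (i : ℕ) (2 ^ (m + 1 - i) * p.1 i) +
    p.2.embDomain (addRightEmbedding (m + 1))

lemma ofColored_apply_fin (p : (Fin (m + 1) → ℕ) × (ℕ →₀ ℕ)) (i : Fin (m + 1)) :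
    ofColored m p i = 2 ^ (m + 1 - i) * p.1 i := by
  have hhigh : p.2.embDomain (addRightEmbedding (m + 1)) i = 0 :=
    Finsupp.embDomain_of_notMem_range _ _ _ (by rintro ⟨j, hj⟩; simp at hj; omega)
  simp only [ofColored, Finsupp.add_apply, hhigh, add_zero, Finsupp.finsetSum_apply,
    Finsupp.single_apply, Fin.val_inj, sum_ite_eq', mem_univ, if_true]

lemma ofColored_apply_add (p : (Fin (m + 1) → ℕ) × (ℕ →₀ ℕ)) (j : ℕ) :
    ofColored m p (j + (m + 1)) = p.2 j := by
  have hlow (i : Fin (m + 1)) :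
      Finsupp.single (i : ℕ) (2 ^ (m + 1 - i) * p.1 i) (j + (m + 1)) = 0 :=
    Finsupp.single_eq_of_ne (by omega)
  simp only [ofColored, Finsupp.add_apply, Finsupp.finsetSum_apply, hlow, sum_const_zero,
    zero_add]
  exact Finsupp.embDomain_apply_self (addRightEmbedding (m + 1)) p.2 j

lemma binWeight_ofColored (p : (Fin (m + 1) → ℕ) × (ℕ →₀ ℕ)) :
    binWeight (ofColored m p) = 2 ^ (m + 1) * (∑ i, p.1 i + binWeight p.2) := by
  have hsingle (i : Fin (m + 1)) :
      binWeight (Finsupp.single (i : ℕ) (2 ^ (m + 1 - i) * p.1 i)) = 2 ^ (m + 1) * p.1 i := by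
    rw [binWeight_single, mul_right_comm, ← pow_add, Nat.sub_add_cancel i.isLt.le]
  rw [ofColored, binWeight_add, binWeight_eq_weight, map_sum, ← binWeight_eq_weight]
  simp only [hsingle, binWeight_embDomain_addRight, ← mul_sum, mul_add]

lemma ofColored_injective : Function.Injective (ofColored m) := by
  rintro ⟨β, γ⟩ ⟨β', γ'⟩ h
  refine Prod.ext (funext fun i => ?_) (Finsupp.ext fun j => ?_)
  · have := ofColored_apply_fin (β, γ) i
    rw [h, ofColored_apply_fin] at this
    exact (Nat.eq_of_mul_eq_mul_left (by positivity) this).symm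
  · simpa only [ofColored_apply_add] using DFunLike.congr_fun h (j + (m + 1))

lemma range_ofColored :
    Set.range (ofColored m) = {α | ∀ i ≤ m, 2 ^ (m + 1 - i) ∣ α i} := by
  ext α
  constructor
  · rintro ⟨p, rfl⟩ i hi
    rw [show i = ((⟨i, by omega⟩ : Fin (m + 1)) : ℕ) from rfl, ofColored_apply_fin]
    exact dvd_mul_right _ _
  · intro hα
    refine ⟨(fun i => α i / 2 ^ (m + 1 - i),
      α.comapDomain (· + (m + 1)) (add_left_injective (m + 1)).injOn), Finsupp.ext fun i => ?_⟩
    rcases lt_or_ge i (m + 1) with hi | hi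
    · rw [show i = ((⟨i, hi⟩ : Fin (m + 1)) : ℕ) from rfl, ofColored_apply_fin]
      exact Nat.mul_div_cancel' (hα i (by omega))
    · obtain ⟨j, rfl⟩ := Nat.exists_eq_add_of_le' hi
      rw [ofColored_apply_add, Finsupp.comapDomain_apply]

lemma Pm_two_pow_mul (z : ℤ) :
    Pm m (2 ^ (m + 1) * z) = ofColored m '' coloredPartitions (Fin (m + 1)) z := by
  have hweight (p : (Fin (m + 1) → ℕ) × (ℕ →₀ ℕ)) :
      (binWeight (ofColored m p) : ℤ) = 2 ^ (m + 1) * (∑ i, p.1 i + binWeight p.2 : ℕ) := by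
    rw [binWeight_ofColored]
    push_cast
    rfl
  ext α
  constructor
  · rintro ⟨hw, hdiv⟩
    obtain ⟨p, rfl⟩ : α ∈ Set.range (ofColored m) := range_ofColored ▸ hdiv
    rw [hweight] at hw
    exact ⟨p, mul_left_cancel₀ (by positivity) hw, rfl⟩
  · rintro ⟨p, hp, rfl⟩
    refine ⟨by rw [hweight, hp], ?_⟩
    exact range_ofColored.subset (Set.mem_range_self p)

theorem r_two_pow_mul (z : ℤ) : r m (2 ^ (m + 1) * z) = numColoredPartitions (Fin (m + 1)) z := by
  rw [r, Pm_two_pow_mul, Nat.card_image_of_injective ofColored_injective, numColoredPartitions]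

end Rescaling

lemma sum_powerset_filter_odd_card {α M : Type*} [AddCommMonoid M] (s : Finset α) (g : ℕ → M) :
    ∑ T ∈ s.powerset with Odd T.card, g T.card =
      ∑ j ∈ range ((#s + 1) / 2), (#s).choose (2 * j + 1) • g (2 * j + 1) := by
  have hodd : (range (#s + 1)).filter Odd = (range ((#s + 1) / 2)).image fun j => 2 * j + 1 := by
    ext k
    simp only [mem_filter, mem_range, mem_image, Nat.odd_iff]
    constructor
    · exact fun _ => ⟨k / 2, by omega, by omega⟩
    · rintro ⟨j, hj, rfl⟩
      omega
  rw [sum_filter, sum_powerset_apply_card fun k => if Odd k then g k else 0]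
  simp only [smul_ite, smul_zero]
  rw [← sum_filter, hodd, sum_image fun a _ b _ h => by omega]

lemma coloredPartitions_sdiff {ι : Type*} [Fintype ι] (z : ℤ) :
    coloredPartitions ι z \ {p | p.2 0 = 0} =
      (fun p => (p.1, p.2 + Finsupp.single 0 1)) '' coloredPartitions ι (z - 1) := by
  ext ⟨β, γ⟩
  simp only [coloredPartitions, Set.mem_sdiff, Set.mem_ofPred_eq, Set.mem_image, Prod.exists,
    Prod.mk.injEq, Nat.cast_add]
  constructor
  · rintro ⟨hp, h0⟩
    have hw := Finsupp.weight_sub_single_add (w := fun i => 2 ^ i) h0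
    rw [← binWeight_eq_weight, pow_zero] at hw
    refine ⟨β, γ - Finsupp.single 0 1, by omega, rfl,
      tsub_add_cancel_of_le (Finsupp.single_le_iff.mpr (by omega))⟩
  · rintro ⟨β, γ, hp, rfl, rfl⟩
    rw [binWeight_add, binWeight_single]
    push_cast at hp ⊢
    exact ⟨by omega, by simp⟩

section OddRecursion

variable {ι : Type*} [DecidableEq ι]

/-- Doubles every part and adds one part `1` of each colour in `T`. -/
noncomputable def doubleAdd (T : Finset ι) (p : (ι → ℕ) × (ℕ →₀ ℕ)) : (ι → ℕ) × (ℕ →₀ ℕ) :=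
  (fun i => 2 * p.1 i + if i ∈ T then 1 else 0, p.2.embDomain (addRightEmbedding 1))

lemma doubleAdd_snd_apply_zero (T : Finset ι) (p : (ι → ℕ) × (ℕ →₀ ℕ)) :
    (doubleAdd T p).2 0 = 0 :=
  Finsupp.embDomain_of_notMem_range _ _ _ (by rintro ⟨j, hj⟩; simp at hj)

lemma doubleAdd_injective (T : Finset ι) : Function.Injective (doubleAdd T) := by
  rintro ⟨β, γ⟩ ⟨β', γ'⟩ h
  obtain ⟨hβ, hγ⟩ := Prod.mk.inj h
  refine Prod.ext (funext fun i => ?_) (Finsupp.embDomain_injective _ hγ)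
  have := congrFun hβ i
  omega

variable [Fintype ι]

lemma weight_doubleAdd (T : Finset ι) (p : (ι → ℕ) × (ℕ →₀ ℕ)) :
    ∑ i, (doubleAdd T p).1 i + binWeight (doubleAdd T p).2 =
      2 * (∑ i, p.1 i + binWeight p.2) + #T := by
  simp only [doubleAdd, sum_add_distrib, ← mul_sum, sum_boole, filter_mem_eq_inter, univ_inter,
    binWeight_embDomain_addRight, pow_one, Nat.cast_id]
  ring

lemma filter_odd_doubleAdd (T : Finset ι) (p : (ι → ℕ) × (ℕ →₀ ℕ)) :
    univ.filter (fun i => Odd ((doubleAdd T p).1 i)) = T := by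
  ext i
  by_cases hi : i ∈ T <;> simp [doubleAdd, hi, Nat.odd_iff]

lemma doubleAdd_halve {β : ι → ℕ} {γ : ℕ →₀ ℕ} (hγ : γ 0 = 0) :
    doubleAdd (univ.filter fun i => Odd (β i))
      (fun i => β i / 2, γ.comapDomain (· + 1) (add_left_injective 1).injOn) = (β, γ) := by
  refine Prod.ext (funext fun i => ?_) (Finsupp.embDomain_comapDomain fun i hi => ?_)
  · simp only [doubleAdd, mem_filter, mem_univ, true_and]
    split_ifs with h <;> rw [Nat.odd_iff] at h <;> omega
  · obtain ⟨j, rfl⟩ := Nat.exists_eq_succ_of_ne_zero (n := i) (by rintro rfl; simp_all)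
    exact ⟨j, rfl⟩

lemma injective_sigma_doubleAdd (z : ℤ) :
    Function.Injective fun x : Σ T : {T : Finset ι // Odd #T},
      coloredPartitions ι ((z - #T.1) / 2) => doubleAdd x.1.1 x.2.1 := by
  rintro ⟨⟨T, hT⟩, p, hp⟩ ⟨⟨T', hT'⟩, p', hp'⟩ (h : doubleAdd T p = doubleAdd T' p')
  obtain rfl : T = T' := by rw [← filter_odd_doubleAdd T p, h, filter_odd_doubleAdd]
  obtain rfl : p = p' := doubleAdd_injective T h
  rfl

lemma range_sigma_doubleAdd {z : ℤ} (hz : Odd z) :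
    Set.range (fun x : Σ T : {T : Finset ι // Odd #T},
      coloredPartitions ι ((z - #T.1) / 2) => doubleAdd x.1.1 x.2.1) =
      coloredPartitions ι z ∩ {p | p.2 0 = 0} := by
  rw [Int.odd_iff] at hz
  ext ⟨β, γ⟩
  constructor
  · rintro ⟨⟨⟨T, hT⟩, p, hp : (_ : ℤ) = _⟩, h⟩
    rw [← h]
    refine ⟨?_, doubleAdd_snd_apply_zero T p⟩
    change ((_ : ℕ) : ℤ) = z
    rw [weight_doubleAdd]
    rw [Nat.odd_iff] at hT
    push_cast at hp ⊢
    omega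
  · rintro ⟨hp : ((_ : ℕ) : ℤ) = z, h0 : γ 0 = 0⟩
    set T := univ.filter fun i => Odd (β i)
    have hw := weight_doubleAdd T
      (fun i => β i / 2, γ.comapDomain (· + 1) (add_left_injective 1).injOn)
    rw [doubleAdd_halve h0] at hw
    have hT : Odd #T := by
      rw [Nat.odd_iff]
      omega
    refine ⟨⟨⟨T, hT⟩, _, ?_⟩, doubleAdd_halve h0⟩
    change ((_ : ℕ) : ℤ) = (z - #T) / 2
    dsimp only at hp hw ⊢
    omega

theorem numColoredPartitions_of_odd {z : ℤ} (hz : Odd z) :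
    numColoredPartitions ι z = numColoredPartitions ι (z - 1) +
      ∑ j ∈ range ((Fintype.card ι + 1) / 2),
        (Fintype.card ι).choose (2 * j + 1) *
          numColoredPartitions ι ((z - (2 * j + 1 : ℕ)) / 2) := by
  have hodd : Nat.card (coloredPartitions ι z ∩ {p | p.2 0 = 0} : Set _) =
      ∑ T ∈ (univ : Finset ι).powerset with Odd #T, numColoredPartitions ι ((z - #T) / 2) := by
    rw [← range_sigma_doubleAdd hz, Nat.card_range_of_injective (injective_sigma_doubleAdd z),
      Nat.card_sigma]
    exact (sum_subtype _ (fun T => by simp)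
      fun T => numColoredPartitions ι ((z - #T) / 2)).symm
  have heven : Nat.card (coloredPartitions ι z \ {p | p.2 0 = 0} : Set _) =
      numColoredPartitions ι (z - 1) := by
    rw [coloredPartitions_sdiff, Nat.card_image_of_injective]
    · rfl
    · exact fun p q h => Prod.ext (Prod.mk.inj h).1 (add_right_cancel (Prod.mk.inj h).2)
  calc numColoredPartitions ι z
      = Nat.card (coloredPartitions ι z \ {p | p.2 0 = 0} : Set _) +
          Nat.card (coloredPartitions ι z ∩ {p | p.2 0 = 0} : Set _) := by
        simp only [numColoredPartitions, Nat.card_coe_set_eq]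
        rw [add_comm, Set.ncard_inter_add_ncard_sdiff_eq_ncard _ _ (Set.toFinite _)]
    _ = _ := by
        rw [heven, hodd, sum_powerset_filter_odd_card univ
          fun k => numColoredPartitions ι ((z - k) / 2), card_univ]
        simp only [smul_eq_mul]

end OddRecursion

theorem stmt0_general (m n : ℕ) (hmod : n % 2 ^ (m + 2) = 2 ^ (m + 1)) :
    r m n = r m ((n : ℤ) - 2 ^ (m + 1)) +
      ∑ j ∈ Finset.range (m / 2 + 1),
        (m + 1).choose (2 * j + 1) *
          r m (((n : ℤ) - (2 * j + 1) * 2 ^ (m + 1)) / 2) := by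
  obtain ⟨q, hq⟩ : ∃ q : ℤ, (n : ℤ) = 2 ^ (m + 1) * (2 * q + 1) := by
    have h : ((2 ^ (m + 2) * (n / 2 ^ (m + 2)) + 2 ^ (m + 1) : ℕ) : ℤ) = n := by
      rw [← hmod, Nat.div_add_mod]
    push_cast at h
    exact ⟨n / 2 ^ (m + 2), by linear_combination -h⟩
  have hhalf (j : ℕ) : ((n : ℤ) - (2 * j + 1) * 2 ^ (m + 1)) / 2 =
      2 ^ (m + 1) * ((2 * q + 1 - (2 * j + 1 : ℕ)) / 2) := by
    rw [hq, show (2 * q + 1 - (2 * j + 1 : ℕ)) = 2 * (q - j) by push_cast; ring,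
      show 2 ^ (m + 1) * (2 * q + 1) - (2 * j + 1) * 2 ^ (m + 1) = 2 * (2 ^ (m + 1) * (q - j)) by
        ring, Int.mul_ediv_cancel_left _ two_ne_zero, Int.mul_ediv_cancel_left _ two_ne_zero]
  simp only [hhalf]
  rw [hq, show 2 ^ (m + 1) * (2 * q + 1) - 2 ^ (m + 1) = 2 ^ (m + 1) * (2 * q + 1 - 1) by ring]
  simp only [r_two_pow_mul]
  rw [numColoredPartitions_of_odd (odd_two_mul_add_one q), Fintype.card_fin,
    show (m + 1 + 1) / 2 = m / 2 + 1 by omega]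

theorem stmt0 (m n : ℕ) (hpos : 0 < n) (hmod : n % 2 ^ (m + 2) = 2 ^ (m + 1)) :
    r m n = r m ((n : ℤ) - 2 ^ (m + 1)) +
      ∑ j ∈ Finset.range (m / 2 + 1),
        (m + 1).choose (2 * j + 1) *
          r m (((n : ℤ) - (2 * j + 1) * 2 ^ (m + 1)) / 2) :=
  stmt0_general m n hmod
end

section
/- Let m ≥ 1 and let n be a nonnegative integer with n ≡ 0 (mod 2^{m+1}). Then r_m(n) = Σ_{k=0}^{n/2^{m+1}} r_{m-1}(2^m·k). -/
/-! Sort a partition counted by `r (m + 1) (2 ^ (m + 2) * N)` by its number `α 0` of parts equal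
to `1`, necessarily a multiple `2 ^ (m + 2) * j` with `j ≤ N`. Halving the remaining parts
(`natTail`) is a bijection onto the partitions counted by `r m (2 ^ (m + 1) * (N - j))`, and
`k = N - j` reindexes the sum. -/

open Finsupp Finset

namespace Finsupp

variable {M : Type*}

noncomputable def natTail [Zero M] (α : ℕ →₀ M) : ℕ →₀ M :=
  comapDomain Nat.succ α Nat.succ_injective.injOn

noncomputable def natCons [AddZeroClass M] (a : M) (β : ℕ →₀ M) : ℕ →₀ M :=
  single 0 a + embDomain (addRightEmbedding 1) β

@[simp] lemma natTail_apply [Zero M] (α : ℕ →₀ M) (i : ℕ) : natTail α i = α (i + 1) := rfl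

section AddZeroClass

variable [AddZeroClass M]

@[simp] lemma natCons_zero (a : M) (β : ℕ →₀ M) : natCons a β 0 = a := by
  rw [natCons, add_apply, single_eq_same, embDomain_of_notMem_range, add_zero]
  rintro ⟨i, hi⟩
  exact Nat.succ_ne_zero i hi

@[simp] lemma natCons_succ (a : M) (β : ℕ →₀ M) (i : ℕ) : natCons a β (i + 1) = β i := by
  rw [natCons, add_apply, single_eq_of_ne (Nat.succ_ne_zero i), zero_add]
  exact embDomain_apply_self _ β i

@[simp] lemma natTail_natCons (a : M) (β : ℕ →₀ M) : natTail (natCons a β) = β := by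
  ext i; simp

lemma natCons_apply_zero_natTail (α : ℕ →₀ M) : natCons (α 0) (natTail α) = α := by
  ext (_ | i) <;> simp

end AddZeroClass

end Finsupp

lemma binWeight_natCons (a : ℕ) (β : ℕ →₀ ℕ) :
    binWeight (natCons a β) = a + 2 * binWeight β := by
  rw [binWeight, natCons, sum_add_index' (by simp) (fun _ _ _ => add_mul _ _ _),
    sum_single_index (zero_mul _), sum_embDomain, binWeight, Finsupp.mul_sum]
  simp only [addRightEmbedding_apply, pow_succ, pow_zero, mul_one]
  congr 1
  exact sum_congr rfl fun _ _ => by ring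

lemma apply_mul_two_pow_le_binWeight (α : ℕ →₀ ℕ) (i : ℕ) : α i * 2 ^ i ≤ binWeight α := by
  by_cases hi : i ∈ α.support
  · exact single_le_sum (f := fun j => α j * 2 ^ j) (fun _ _ => Nat.zero_le _) hi
  · simp [notMem_support_iff.mp hi]

lemma finite_setOf_binWeight_eq (n : ℕ) : {α | binWeight α = n}.Finite := by
  refine ((range (n + 1)).finsupp fun _ => range (n + 1)).finite_toSet.subset fun α hα => ?_
  have hle (i : ℕ) : α i * 2 ^ i ≤ n := hα ▸ apply_mul_two_pow_le_binWeight α i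
  rw [mem_coe, mem_finsupp_iff]
  refine ⟨fun i hi => ?_, fun i _ => ?_⟩ <;> have := hle i
  · have := Nat.lt_two_pow_self (n := i)
    have := Nat.le_mul_of_pos_left (2 ^ i) (Nat.pos_of_ne_zero (mem_support_iff.mp hi))
    rw [mem_range]; omega
  · have := Nat.le_mul_of_pos_right (α i) (Nat.two_pow_pos i)
    rw [mem_range]; omega

lemma finite_Pm (m : ℕ) (n : ℤ) : (Pm m n).Finite :=
  (finite_setOf_binWeight_eq n.toNat).subset fun α hα => by
    have := hα.1; show binWeight α = n.toNat; omega

lemma nonneg_of_mem_Pm {m : ℕ} {n : ℤ} {α : ℕ →₀ ℕ} (hα : α ∈ Pm m n) : 0 ≤ n :=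
  hα.1 ▸ Int.natCast_nonneg _

lemma two_pow_dvd_apply_zero_of_mem_Pm {m : ℕ} {n : ℤ} {α : ℕ →₀ ℕ} (hα : α ∈ Pm m n) :
    2 ^ (m + 1) ∣ α 0 := by
  simpa using hα.2 0 (Nat.zero_le _)

lemma lt_div_add_one_of_mem_Pm_sub {m n c j : ℕ} {β : ℕ →₀ ℕ} (hc : 0 < c)
    (hβ : β ∈ Pm m (n - c * j)) : j < n / c + 1 := by
  refine Nat.lt_succ_of_le <| (Nat.le_div_iff_mul_le hc).mpr ?_
  have := nonneg_of_mem_Pm hβ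
  rw [mul_comm]
  exact_mod_cast sub_nonneg.mp this

lemma natCons_mem_Pm_succ_iff {m a : ℕ} {β : ℕ →₀ ℕ} {n b : ℤ} (hab : a + 2 * b = n) :
    natCons a β ∈ Pm (m + 1) n ↔ 2 ^ (m + 2) ∣ a ∧ β ∈ Pm m b := by
  have hw : (binWeight (natCons a β) : ℤ) = n ↔ (binWeight β : ℤ) = b := by
    rw [binWeight_natCons]; push_cast; omega
  simp only [Pm, Set.mem_ofPred_eq, hw]
  constructor
  · rintro ⟨hβ, hdvd⟩
    refine ⟨by simpa using hdvd 0 (Nat.zero_le _), hβ, fun i hi => ?_⟩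
    simpa using hdvd (i + 1) (by omega)
  · rintro ⟨ha, hβ, hdvd⟩
    refine ⟨hβ, ?_⟩
    rintro (_ | i) hi
    · simpa using ha
    · simpa using hdvd i (by omega)

lemma natTail_mem_Pm_of_mem_Pm_succ {m : ℕ} {n : ℤ} {α : ℕ →₀ ℕ} (hα : α ∈ Pm (m + 1) (2 * n)) :
    natTail α ∈ Pm m (n - 2 ^ (m + 1) * (α 0 / 2 ^ (m + 2) : ℕ)) := by
  obtain ⟨j, hj⟩ := two_pow_dvd_apply_zero_of_mem_Pm hα
  rw [← natCons_apply_zero_natTail α] at hα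
  refine ((natCons_mem_Pm_succ_iff ?_).mp hα).2
  rw [hj, Nat.mul_div_cancel_left _ (Nat.two_pow_pos _)]
  push_cast; ring

noncomputable def pmSuccTwoMulEquiv (m n : ℕ) :
    Pm (m + 1) (2 * n) ≃ Σ j : Fin (n / 2 ^ (m + 1) + 1), Pm m (n - 2 ^ (m + 1) * (j : ℕ)) where
  toFun α :=
    have hβ := natTail_mem_Pm_of_mem_Pm_succ α.2
    ⟨⟨α.1 0 / 2 ^ (m + 2), lt_div_add_one_of_mem_Pm_sub (Nat.two_pow_pos _) hβ⟩, ⟨natTail α.1, hβ⟩⟩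
  invFun jβ := ⟨natCons (2 ^ (m + 2) * jβ.1) jβ.2, (natCons_mem_Pm_succ_iff (by push_cast; ring)).mpr
    ⟨dvd_mul_right _ _, jβ.2.2⟩⟩
  left_inv α := Subtype.ext <| by
    change natCons (2 ^ (m + 2) * (α.1 0 / 2 ^ (m + 2))) (natTail α.1) = α.1
    rw [Nat.mul_div_cancel' (two_pow_dvd_apply_zero_of_mem_Pm α.2), natCons_apply_zero_natTail]
  right_inv jβ := Sigma.subtype_ext (Fin.ext <| by simp) (natTail_natCons _ _)

lemma r_succ_two_mul (m n : ℕ) :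
    r (m + 1) (2 * n) = ∑ j ∈ range (n / 2 ^ (m + 1) + 1), r m (n - 2 ^ (m + 1) * j) := by
  have (j : Fin (n / 2 ^ (m + 1) + 1)) : Finite (Pm m (n - 2 ^ (m + 1) * (j : ℕ))) :=
    (finite_Pm _ _).to_subtype
  rw [r, Nat.card_congr (pmSuccTwoMulEquiv m n), Nat.card_sigma,
    ← Fin.sum_univ_eq_sum_range (fun j => r m (n - 2 ^ (m + 1) * j))]
  rfl

theorem stmt3 (m : ℕ) (hm : 1 ≤ m) (n : ℕ) (hn : 2 ^ (m + 1) ∣ n) :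
    r m n = ∑ k ∈ Finset.range (n / 2 ^ (m + 1) + 1), r (m - 1) ((2 ^ m * k : ℕ) : ℤ) := by
  obtain ⟨m, rfl⟩ := Nat.exists_eq_add_of_le' hm
  obtain ⟨N, rfl⟩ := hn
  have hn : ((2 ^ (m + 1 + 1) * N : ℕ) : ℤ) = 2 * ((2 ^ (m + 1) * N : ℕ) : ℤ) := by
    push_cast; ring
  rw [hn, r_succ_two_mul, Nat.mul_div_cancel_left _ (Nat.two_pow_pos _),
    Nat.mul_div_cancel_left _ (Nat.two_pow_pos _), Nat.add_sub_cancel,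
    ← sum_range_reflect (fun k => r m ((2 ^ (m + 1) * k : ℕ) : ℤ))]
  refine sum_congr rfl fun j hj => ?_
  have hjN : j ≤ N := Nat.lt_succ_iff.mp (mem_range.mp hj)
  rw [Nat.add_sub_cancel]
  push_cast [Nat.cast_sub hjN]
  ring_nf
end

section
/- Let m be a nonnegative integer and n a nonnegative even integer. The map σ sending (α_1, α_2, α_3, …) to (α_2, α_3, …) is a bijection from the set of binary partitions of n with α_1 = 0 and 2^{m+3-i} ∣ α_i for all 2 ≤ i ≤ m+2, onto the set P_m(n/2) of binary partitions of n/2 satisfying 2^{m+2-i} ∣ α_i for all 1 ≤ i ≤ m+1. In particular these two sets have the same cardinality. -/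
/-- The map `σ` sending `(α₁, α₂, α₃, …)` to `(α₂, α₃, …)`. -/
noncomputable def sigmaShift (α : ℕ →₀ ℕ) : ℕ →₀ ℕ :=
  Finsupp.comapDomain Nat.succ α (Nat.succ_injective.injOn)

/-- The binary partitions of `n` with `α_1 = 0` and `2 ^ (m + 3 - i) ∣ α_i` for `2 ≤ i ≤ m + 2`
(paper indexing). -/
def shiftedPm (m n : ℕ) : Set (ℕ →₀ ℕ) :=
  {α | binWeight α = n ∧ α 0 = 0 ∧ ∀ i, 1 ≤ i → i ≤ m + 1 → 2 ^ (m + 2 - i) ∣ α i}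

noncomputable def upShift (α : ℕ →₀ ℕ) : ℕ →₀ ℕ :=
  Finsupp.embDomain ⟨Nat.succ, Nat.succ_injective⟩ α

lemma sigmaShift_apply (α : ℕ →₀ ℕ) (i : ℕ) : sigmaShift α i = α (i + 1) := rfl

lemma upShift_apply_succ (α : ℕ →₀ ℕ) (i : ℕ) : upShift α (i + 1) = α i :=
  Finsupp.embDomain_apply_self _ α i

lemma upShift_apply_zero (α : ℕ →₀ ℕ) : upShift α 0 = 0 :=
  Finsupp.embDomain_of_notMem_range _ _ _ fun ⟨i, hi⟩ => Nat.succ_ne_zero i hi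

lemma sigmaShift_upShift (α : ℕ →₀ ℕ) : sigmaShift (upShift α) = α := by
  ext i
  rw [sigmaShift_apply, upShift_apply_succ]

lemma upShift_sigmaShift {α : ℕ →₀ ℕ} (h0 : α 0 = 0) : upShift (sigmaShift α) = α := by
  ext (_ | i)
  · rw [upShift_apply_zero, h0]
  · rw [upShift_apply_succ, sigmaShift_apply]

lemma binWeight_upShift (α : ℕ →₀ ℕ) : binWeight (upShift α) = 2 * binWeight α := by
  rw [binWeight, upShift, Finsupp.sum_embDomain, binWeight, Finsupp.mul_sum]
  refine Finsupp.sum_congr fun i _ => ?_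
  simp only [Function.Embedding.coeFn_mk, Nat.succ_eq_add_one, pow_succ]
  ring

lemma two_mul_binWeight_sigmaShift {α : ℕ →₀ ℕ} (h0 : α 0 = 0) :
    2 * binWeight (sigmaShift α) = binWeight α := by
  rw [← binWeight_upShift, upShift_sigmaShift h0]

lemma mapsTo_sigmaShift_shiftedPm (m n : ℕ) :
    Set.MapsTo sigmaShift (shiftedPm m n) (Pm m ((n / 2 : ℕ) : ℤ)) := by
  rintro α ⟨hw, h0, hdvd⟩
  have hw' := two_mul_binWeight_sigmaShift h0
  refine ⟨by omega, fun i hi => ?_⟩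
  rw [sigmaShift_apply]
  simpa [show m + 2 - (i + 1) = m + 1 - i by omega] using hdvd (i + 1) (by omega) (by omega)

lemma mapsTo_upShift_Pm {m n : ℕ} (hn : 2 ∣ n) :
    Set.MapsTo upShift (Pm m ((n / 2 : ℕ) : ℤ)) (shiftedPm m n) := by
  rintro β ⟨hw, hdvd⟩
  refine ⟨?_, upShift_apply_zero β, fun i hi1 hi2 => ?_⟩
  · rw [binWeight_upShift, show binWeight β = n / 2 by exact_mod_cast hw]
    exact Nat.mul_div_cancel' hn
  · obtain ⟨j, rfl⟩ := Nat.exists_eq_add_of_le' hi1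
    rw [upShift_apply_succ]
    simpa [show m + 2 - (j + 1) = m + 1 - j by omega] using hdvd j (by omega)

lemma bijOn_sigmaShift_shiftedPm {m n : ℕ} (hn : 2 ∣ n) :
    Set.BijOn sigmaShift (shiftedPm m n) (Pm m ((n / 2 : ℕ) : ℤ)) :=
  Set.InvOn.bijOn ⟨fun _ hα => upShift_sigmaShift hα.2.1, fun β _ => sigmaShift_upShift β⟩
    (mapsTo_sigmaShift_shiftedPm m n) (mapsTo_upShift_Pm hn)

theorem stmt6 (m n : ℕ) (hn : 2 ∣ n) :
    Set.BijOn sigmaShift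
      {α : ℕ →₀ ℕ | binWeight α = n ∧ α 0 = 0 ∧
        ∀ i, 1 ≤ i → i ≤ m + 1 → 2 ^ (m + 2 - i) ∣ α i}
      (Pm m ((n / 2 : ℕ) : ℤ)) ∧
    Nat.card {α : ℕ →₀ ℕ | binWeight α = n ∧ α 0 = 0 ∧
        ∀ i, 1 ≤ i → i ≤ m + 1 → 2 ^ (m + 2 - i) ∣ α i} =
      Nat.card (Pm m ((n / 2 : ℕ) : ℤ)) :=
  have hbij : Set.BijOn sigmaShift (shiftedPm m n) (Pm m ((n / 2 : ℕ) : ℤ)) :=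
    bijOn_sigmaShift_shiftedPm hn
  ⟨hbij, Nat.card_congr hbij.equiv⟩
end

section
/- Let m ≥ 0, let n ≥ 0, let ε_2, …, ε_{m+2} ∈ {0,1}, and suppose ε_i = 1 for some fixed i with 2 ≤ i ≤ m+2. Then the map τ_i sending (0, α_2, α_3, …) to (0, α_2, …, α_{i-1}, α_i − 2^{m+2-i}, α_{i+1}, …) is a bijection from P_{m,0}^{ε_2,…,ε_i,…,ε_{m+2}}(n) onto P_{m,0}^{ε_2,…,0,…,ε_{m+2}}(n − 2^{m+1}), where in the target the superscript in position i is replaced by 0. In particular these two sets have the same cardinality. -/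
/-- `Pm0 m n ε` is the set `P_{m,0}^{ε₂,…,ε_{m+2}}(n)` of partitions in `Pm m n`
with `α₁ = 0` and `α_i ≡ ε_i · 2^(m+2-i) (mod 2^(m+3-i))` for `2 ≤ i ≤ m + 2`;
all indices (of both `α` and `ε`) are shifted down by one here, so the
congruences read `α i ≡ ε i * 2^(m+1-i) (mod 2^(m+2-i))` for `1 ≤ i ≤ m + 1`. -/
def Pm0 (m : ℕ) (n : ℤ) (ε : ℕ → ℕ) : Set (ℕ →₀ ℕ) :=
  {α | α ∈ Pm m n ∧ α 0 = 0 ∧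
    ∀ i, 1 ≤ i → i ≤ m + 1 → α i ≡ ε i * 2 ^ (m + 1 - i) [MOD 2 ^ (m + 2 - i)]}

lemma Nat.ModEq.le_of_lt {a b n : ℕ} (h : a ≡ b [MOD n]) (hb : b < n) : b ≤ a :=
  (Nat.mod_eq_of_lt hb ▸ h : a % n = b) ▸ Nat.mod_le a n

lemma binWeight_update (α : ℕ →₀ ℕ) (i b : ℕ) :
    binWeight (α.update i b) + α i * 2 ^ i = binWeight α + b * 2 ^ i :=
  Finsupp.sum_update_add α i b (fun j a => a * 2 ^ j) (by simp)
    (fun j a₁ a₂ => add_mul a₁ a₂ _)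

lemma binWeight_update_add (α : ℕ →₀ ℕ) (i c : ℕ) :
    binWeight (α.update i (α i + c)) = binWeight α + c * 2 ^ i := by
  have := binWeight_update α i (α i + c)
  rw [add_mul] at this
  omega

lemma binWeight_update_sub {α : ℕ →₀ ℕ} {i c : ℕ} (hc : c ≤ α i) :
    binWeight (α.update i (α i - c)) + c * 2 ^ i = binWeight α := by
  have h := binWeight_update α i (α i - c)
  have hsplit : α i * 2 ^ i = (α i - c) * 2 ^ i + c * 2 ^ i := by
    rw [← add_mul, Nat.sub_add_cancel hc]
  omega

section Pm0

variable {m i : ℕ} {n : ℤ} {ε : ℕ → ℕ}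

lemma pow_le_of_mem_Pm0 {α : ℕ →₀ ℕ} (hα : α ∈ Pm0 m n ε) (hi1 : 1 ≤ i) (hi2 : i ≤ m + 1)
    (hεi : ε i = 1) : 2 ^ (m + 1 - i) ≤ α i := by
  refine Nat.ModEq.le_of_lt (by simpa [hεi] using hα.2.2 i hi1 hi2) ?_
  exact Nat.pow_lt_pow_right (by norm_num) (by omega)

/-- The divisibility condition at `i` comes for free from `hb`: `2 ^ (m + 1 - i)` divides both
its modulus and its residue. -/
lemma update_mem_Pm0 {α : ℕ →₀ ℕ} {b : ℕ} {n' : ℤ} {ε' : ℕ → ℕ} (hα : α ∈ Pm0 m n ε)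
    (hi1 : 1 ≤ i) (hε' : ∀ j ≠ i, ε' j = ε j)
    (hw : (binWeight (α.update i b) : ℤ) = n')
    (hb : b ≡ ε' i * 2 ^ (m + 1 - i) [MOD 2 ^ (m + 2 - i)]) :
    α.update i b ∈ Pm0 m n' ε' := by
  classical
  obtain ⟨⟨-, hdiv⟩, h0, hcong⟩ := hα
  refine ⟨⟨hw, fun j hj => ?_⟩, ?_, fun j hj1 hj2 => ?_⟩
  · rcases eq_or_ne j i with rfl | hji
    · simp [hb.dvd_iff (Nat.pow_dvd_pow 2 (by omega : m + 1 - j ≤ m + 2 - j))]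
    · simpa [Finsupp.update_apply, hji] using hdiv j hj
  · rwa [Finsupp.update_apply, if_neg (by omega)]
  · rcases eq_or_ne j i with rfl | hji
    · simpa using hb
    · simpa [Finsupp.update_apply, hji, hε' j hji] using hcong j hj1 hj2

lemma update_sub_mem_Pm0 {α : ℕ →₀ ℕ} (hα : α ∈ Pm0 m n ε) (hi1 : 1 ≤ i) (hi2 : i ≤ m + 1)
    (hεi : ε i = 1) :
    α.update i (α i - 2 ^ (m + 1 - i)) ∈ Pm0 m (n - 2 ^ (m + 1)) (Function.update ε i 0) := by
  have hle := pow_le_of_mem_Pm0 hα hi1 hi2 hεi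
  refine update_mem_Pm0 hα hi1 (fun j hj => Function.update_of_ne hj _ _) ?_ ?_
  · have h := binWeight_update_sub hle
    rw [Nat.pow_sub_mul_pow 2 hi2] at h
    rw [← hα.1.1, ← h]
    push_cast
    ring
  · have h : α i ≡ 2 ^ (m + 1 - i) [MOD 2 ^ (m + 2 - i)] := by
      simpa [hεi] using hα.2.2 i hi1 hi2
    simpa using h.sub_right hle le_rfl

lemma update_add_mem_Pm0 {β : ℕ →₀ ℕ} (hβ : β ∈ Pm0 m (n - 2 ^ (m + 1)) (Function.update ε i 0))
    (hi1 : 1 ≤ i) (hi2 : i ≤ m + 1) (hεi : ε i = 1) :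
    β.update i (β i + 2 ^ (m + 1 - i)) ∈ Pm0 m n ε := by
  refine update_mem_Pm0 hβ hi1 (fun j hj => (Function.update_of_ne hj _ _).symm) ?_ ?_
  · rw [binWeight_update_add, Nat.pow_sub_mul_pow 2 hi2]
    push_cast
    rw [hβ.1.1]
    ring
  · have h := (hβ.2.2 i hi1 hi2).add_right (2 ^ (m + 1 - i))
    simpa [hεi] using h

end Pm0

theorem stmt7_general (m n : ℕ) (ε : ℕ → ℕ)
    (i : ℕ) (hi1 : 1 ≤ i) (hi2 : i ≤ m + 1) (hεi : ε i = 1) :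
    Set.BijOn (fun α : ℕ →₀ ℕ => α.update i (α i - 2 ^ (m + 1 - i)))
      (Pm0 m n ε) (Pm0 m ((n : ℤ) - 2 ^ (m + 1)) (Function.update ε i 0)) ∧
    Nat.card (Pm0 m n ε) =
      Nat.card (Pm0 m ((n : ℤ) - 2 ^ (m + 1)) (Function.update ε i 0)) := by
  have hinv : Set.InvOn (fun β : ℕ →₀ ℕ => β.update i (β i + 2 ^ (m + 1 - i)))
      (fun α : ℕ →₀ ℕ => α.update i (α i - 2 ^ (m + 1 - i)))
      (Pm0 m n ε) (Pm0 m ((n : ℤ) - 2 ^ (m + 1)) (Function.update ε i 0)) := by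
    refine ⟨fun α hα => ?_, fun β _ => ?_⟩
    · simp [Nat.sub_add_cancel (pow_le_of_mem_Pm0 hα hi1 hi2 hεi)]
    · simp
  have hbij := hinv.bijOn (fun α hα => update_sub_mem_Pm0 hα hi1 hi2 hεi)
    (fun β hβ => update_add_mem_Pm0 hβ hi1 hi2 hεi)
  exact ⟨hbij, Nat.card_congr hbij.equiv⟩

/-- Lemma (τ_i): for `2 ≤ i ≤ m + 2` with `ε_i = 1` (index shifted down by one
here, so `1 ≤ i ≤ m + 1`), the map subtracting `2^(m+2-i)` (here `2^(m+1-i)`)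
from the `i`-th entry is a bijection from `P_{m,0}^{ε₂,…,ε_i,…,ε_{m+2}}(n)` onto
`P_{m,0}^{ε₂,…,0,…,ε_{m+2}}(n - 2^(m+1))`; in particular the two sets have the
same cardinality. -/
theorem stmt7 (m n : ℕ) (ε : ℕ → ℕ)
    (hε : ∀ j, 1 ≤ j → j ≤ m + 1 → ε j = 0 ∨ ε j = 1)
    (i : ℕ) (hi1 : 1 ≤ i) (hi2 : i ≤ m + 1) (hεi : ε i = 1) :
    Set.BijOn (fun α : ℕ →₀ ℕ => α.update i (α i - 2 ^ (m + 1 - i)))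
      (Pm0 m n ε) (Pm0 m ((n : ℤ) - 2 ^ (m + 1)) (Function.update ε i 0)) ∧
    Nat.card (Pm0 m n ε) =
      Nat.card (Pm0 m ((n : ℤ) - 2 ^ (m + 1)) (Function.update ε i 0)) :=
  stmt7_general m n ε i hi1 hi2 hεi
end

section
/- Let m ≥ 0, n ≥ 0, and let (0, α_2, α_3, …) be a binary partition of n with α_1 = 0 satisfying 2^{m+2-i} ∣ α_i for all 2 ≤ i ≤ m+1. Let k be the number of indices i with 2 ≤ i ≤ m+1 such that α_i ≡ 2^{m+2-i} (mod 2^{m+3-i}). If n ≡ 2^{m+1} (mod 2^{m+2}) and k is even, or if n ≡ 0 (mod 2^{m+2}) and k is odd, then α_{m+2} is odd. -/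
/-!
Modulo `2 ^ (m + 2)` only the parts below `2 ^ (m + 2)` matter, and the divisibility hypotheses
make each of them a multiple of `2 ^ (m + 1)`: writing `α i = 2 ^ (m + 1 - i) * b i`,
`n ≡ 2 ^ (m + 1) * (∑ b i + α (m + 1)) [MOD 2 ^ (m + 2)]`. The congruence defining `k` says exactly
that `b i` is odd, so `∑ b i ≡ k [MOD 2]`, and the residue of `n` fixes the parity of `k + α (m + 1)`.
-/

open Finset

theorem binWeight_modEq_sum_range (α : ℕ →₀ ℕ) (N : ℕ) :
    binWeight α ≡ ∑ i ∈ range N, α i * 2 ^ i [MOD 2 ^ N] := by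
  have hsub : range N ⊆ range N ∪ α.support := subset_union_left
  rw [binWeight, Finsupp.sum_of_support_subset α subset_union_right _ (by simp),
    ← sum_sdiff hsub]
  have hhigh : 2 ^ N ∣ ∑ i ∈ (range N ∪ α.support) \ range N, α i * 2 ^ i := by
    refine dvd_sum fun i hi => dvd_mul_of_dvd_right (pow_dvd_pow 2 ?_) _
    simpa using (mem_sdiff.mp hi).2
  simpa using (Nat.modEq_zero_iff_dvd.mpr hhigh).add_right (∑ i ∈ range N, α i * 2 ^ i)

theorem Nat.modEq_two_pow_iff_odd_div {a j : ℕ} (h : 2 ^ j ∣ a) :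
    a ≡ 2 ^ j [MOD 2 ^ (j + 1)] ↔ Odd (a / 2 ^ j) := by
  obtain ⟨b, rfl⟩ := h
  have hpos : 0 < 2 ^ j := by positivity
  rw [Nat.mul_div_cancel_left _ hpos, Nat.ModEq, pow_succ, Nat.mul_mod_mul_left,
    Nat.mod_eq_of_lt (by omega : 2 ^ j < 2 ^ j * 2), Nat.mul_eq_left hpos.ne', Nat.odd_iff]

section

variable {m : ℕ} {α : ℕ →₀ ℕ}

theorem sum_range_eq_two_pow_mul (h0 : α 0 = 0)
    (hdvd : ∀ i, 1 ≤ i → i ≤ m → 2 ^ (m + 1 - i) ∣ α i) :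
    ∑ i ∈ range (m + 2), α i * 2 ^ i
      = 2 ^ (m + 1) * (∑ i ∈ Icc 1 m, α i / 2 ^ (m + 1 - i) + α (m + 1)) := by
  have hterm : ∀ i ∈ Icc 1 m, α i * 2 ^ i = 2 ^ (m + 1) * (α i / 2 ^ (m + 1 - i)) := by
    intro i hi
    obtain ⟨hi1, him⟩ := mem_Icc.mp hi
    obtain ⟨b, hb⟩ := hdvd i hi1 him
    rw [hb, Nat.mul_div_cancel_left _ (by positivity), mul_right_comm, ← pow_add,
      Nat.sub_add_cancel (by omega), mul_comm]
  rw [sum_range_succ, range_eq_Ico, sum_eq_sum_Ico_succ_bot (by omega), h0, zero_mul, zero_add,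
    Finset.Ico_add_one_right_eq_Icc, sum_congr rfl hterm,
    ← mul_sum, mul_add, mul_comm (α (m + 1))]

theorem odd_sum_div_iff_odd_card
    (hdvd : ∀ i, 1 ≤ i → i ≤ m → 2 ^ (m + 1 - i) ∣ α i) :
    Odd (∑ i ∈ Icc 1 m, α i / 2 ^ (m + 1 - i)) ↔
      Odd #{i ∈ Icc 1 m | α i ≡ 2 ^ (m + 1 - i) [MOD 2 ^ (m + 2 - i)]} := by
  rw [odd_sum_iff_odd_card_odd]
  congr! 3 with i hi
  obtain ⟨hi1, him⟩ := mem_Icc.mp hi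
  rw [show m + 2 - i = m + 1 - i + 1 by omega, Nat.modEq_two_pow_iff_odd_div (hdvd i hi1 him)]

end

/-- With indices shifted down by one (paper's `α_i` is `α (i-1)` here): if
`(0, α₂, α₃, …)` is a binary partition of `n` with `α₁ = 0` and
`2^(m+2-i) ∣ α_i` for `2 ≤ i ≤ m+1`, and `k` is the number of indices
`2 ≤ i ≤ m+1` with `α_i ≡ 2^(m+2-i) (mod 2^(m+3-i))`, then whenever
`n ≡ 2^(m+1) (mod 2^(m+2))` with `k` even, or `n ≡ 0 (mod 2^(m+2))` with `k`
odd, the entry `α_{m+2}` is odd. -/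
theorem stmt11 (m n : ℕ) (α : ℕ →₀ ℕ)
    (hsum : binWeight α = n) (h0 : α 0 = 0)
    (hdvd : ∀ i, 1 ≤ i → i ≤ m → 2 ^ (m + 1 - i) ∣ α i)
    (k : ℕ)
    (hk : k = ((Finset.Icc 1 m).filter
      (fun i => α i ≡ 2 ^ (m + 1 - i) [MOD 2 ^ (m + 2 - i)])).card)
    (h : (n % 2 ^ (m + 2) = 2 ^ (m + 1) ∧ Even k) ∨
         (n % 2 ^ (m + 2) = 0 ∧ Odd k)) :
    Odd (α (m + 1)) := by
  set S := ∑ i ∈ Icc 1 m, α i / 2 ^ (m + 1 - i)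
  have hn : n % 2 ^ (m + 2) = 2 ^ (m + 1) * ((S + α (m + 1)) % 2) := by
    have := binWeight_modEq_sum_range α (m + 2)
    rw [hsum, sum_range_eq_two_pow_mul h0 hdvd, pow_succ] at this
    rw [pow_succ, this, Nat.mul_mod_mul_left]
  have hS : S % 2 = k % 2 := by
    have := odd_sum_div_iff_odd_card hdvd
    rw [← hk, Nat.odd_iff, Nat.odd_iff] at this
    omega
  have hpos : 0 < 2 ^ (m + 1) := by positivity
  rw [Nat.odd_iff]
  rcases h with ⟨hmod, hpar⟩ | ⟨hmod, hpar⟩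
  · rw [Nat.even_iff] at hpar
    rw [hmod] at hn
    have := (Nat.mul_eq_left hpos.ne').mp hn.symm
    omega
  · rw [Nat.odd_iff] at hpar
    rw [hmod, eq_comm, Nat.mul_eq_zero] at hn
    omega
end

section
/- For every nonnegative integer m, r_m(2^{m+1}) = m + 2. -/
theorem stmt13 (m : ℕ) : r m (2 ^ (m + 1)) = m + 2 := by
  classical
  set f : ℕ → (ℕ →₀ ℕ) := fun i => Finsupp.single i (2 ^ (m + 1 - i)) with hf
  have hfinj : Function.Injective f := by
    intro i j hij
    by_contra hne
    have h1 : f i i = 2 ^ (m + 1 - i) := by simp [hf]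
    have h2 : f j i = 0 := by simp [hf, Finsupp.single_apply, Ne.symm hne]
    rw [hij, h2] at h1
    exact (pow_ne_zero _ two_ne_zero) h1.symm
  have hset : Pm m (2 ^ (m + 1)) = ↑((Finset.range (m + 2)).image f) := by
    ext α
    simp only [Pm, Set.mem_setOf_eq, Finset.coe_image, Set.mem_image, Finset.mem_coe,
      Finset.mem_range]
    constructor
    · rintro ⟨hw, hdvd⟩
      have hwn : binWeight α = 2 ^ (m + 1) := by exact_mod_cast hw
      have hsum : binWeight α = ∑ i ∈ α.support, α i * 2 ^ i := rfl
      -- support is nonempty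
      have hne : α.support.Nonempty := by
        by_contra h
        rw [Finset.not_nonempty_iff_eq_empty] at h
        rw [hsum, h] at hwn
        simp at hwn
        exact pow_ne_zero _ two_ne_zero hwn.symm
      obtain ⟨j, hj⟩ := hne
      have hja : α j ≠ 0 := Finsupp.mem_support_iff.mp hj
      have hle : α j * 2 ^ j ≤ 2 ^ (m + 1) := by
        rw [← hwn, hsum]
        exact Finset.single_le_sum (f := fun i => α i * 2 ^ i) (fun i _ => Nat.zero_le _) hj
      have hge : 2 ^ (m + 1) ≤ α j * 2 ^ j := by
        rcases le_or_gt j m with hjm | hjm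
        · have hd := hdvd j hjm
          have h1 : 2 ^ (m + 1 - j) ≤ α j := Nat.le_of_dvd (Nat.pos_of_ne_zero hja) hd
          calc 2 ^ (m + 1) = 2 ^ (m + 1 - j) * 2 ^ j := by
                rw [← pow_add, Nat.sub_add_cancel (by omega)]
            _ ≤ α j * 2 ^ j := Nat.mul_le_mul_right _ h1
        · calc 2 ^ (m + 1) ≤ 2 ^ j := Nat.pow_le_pow_right (by norm_num) hjm
            _ ≤ α j * 2 ^ j := Nat.le_mul_of_pos_left _ (Nat.pos_of_ne_zero hja)
      have heq : α j * 2 ^ j = 2 ^ (m + 1) := le_antisymm hle hge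
      have hjle : j ≤ m + 1 := by
        by_contra h
        have : 2 ^ (m + 1) < 2 ^ j := Nat.pow_lt_pow_right (by norm_num) (by omega)
        have : 2 ^ j ≤ α j * 2 ^ j := Nat.le_mul_of_pos_left _ (Nat.pos_of_ne_zero hja)
        omega
      have hαj : α j = 2 ^ (m + 1 - j) := by
        have h2 : 2 ^ (m + 1 - j) * 2 ^ j = 2 ^ (m + 1) := by
          rw [← pow_add, Nat.sub_add_cancel (by omega)]
        have := heq.trans h2.symm
        exact Nat.eq_of_mul_eq_mul_right (Nat.pos_of_ne_zero (pow_ne_zero _ two_ne_zero)) this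
      -- all other entries are zero
      have hrest : ∑ i ∈ α.support.erase j, α i * 2 ^ i = 0 := by
        have := Finset.add_sum_erase α.support (fun i => α i * 2 ^ i) hj
        rw [← hsum, hwn, heq] at this
        omega
      refine ⟨j, by omega, ?_⟩
      ext k
      rcases eq_or_ne k j with rfl | hk
      · simp [hf, hαj]
      · have hk0 : α k = 0 := by
          by_contra h
          have hkmem : k ∈ α.support.erase j :=
            Finset.mem_erase.mpr ⟨hk, Finsupp.mem_support_iff.mpr h⟩
          have := (Finset.sum_eq_zero_iff.mp hrest) k hkmem
          simp at this
          exact h this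
        simp [hf, Finsupp.single_apply, Ne.symm hk, hk0]
    · rintro ⟨i, hi, rfl⟩
      have hile : i ≤ m + 1 := by omega
      constructor
      · have : binWeight (f i) = 2 ^ (m + 1 - i) * 2 ^ i := by
          simp [hf, binWeight, Finsupp.sum_single_index]
        rw [this, ← pow_add, Nat.sub_add_cancel hile]
        push_cast
        ring
      · intro k hk
        rcases eq_or_ne k i with rfl | hki
        · simp [hf]
        · simp [hf, Finsupp.single_apply, Ne.symm hki]
  rw [r, hset]
  have : Nat.card ↑((Finset.range (m + 2)).image f : Set (ℕ →₀ ℕ)) =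
      ((Finset.range (m + 2)).image f).card := by
    simp [Nat.card_eq_fintype_card, ← Nat.Iio_eq_range]
  rw [this, Finset.card_image_of_injective _ hfinj, Finset.card_range]
end

section
/- For every nonnegative integer m, r_m(2^{m+2}) = 2(m+1) + 2 + C(m+1, 2), where C(m+1,2) is the binomial coefficient. -/
/-!
Dividing `α_i` by `2 ^ (m + 1 - i)` for `i ≤ m` identifies the partitions counted by
`r m (2 ^ (m + 1) * k)` with the unrestricted `γ` of reduced weight `k`, in which the parts
`2 ^ i` with `i ≤ m + 1` all weigh `1` and larger parts weigh `2 ^ (i - (m + 1))`. For `k = 2` such a `γ` is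
either the single part `2 ^ (m + 2)` or a multiset of two indices among the `m + 2` smallest ones,
so there are `1 + C(m + 3, 2)` of them.
-/

open Finset

namespace BinaryPartition

variable (m : ℕ)

noncomputable def scale (γ : ℕ →₀ ℕ) : ℕ →₀ ℕ :=
  Finsupp.onFinset γ.support (fun i => 2 ^ (m + 1 - i) * γ i) fun _ h =>
    Finsupp.mem_support_iff.mpr (right_ne_zero_of_mul h)

@[simp]
lemma scale_apply (γ : ℕ →₀ ℕ) (i : ℕ) : scale m γ i = 2 ^ (m + 1 - i) * γ i := rfl

lemma scale_injective : Function.Injective (scale m) := fun γ δ h => by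
  ext i
  simpa using DFunLike.congr_fun h i

lemma mem_range_scale_iff (α : ℕ →₀ ℕ) :
    α ∈ Set.range (scale m) ↔ ∀ i ≤ m, 2 ^ (m + 1 - i) ∣ α i := by
  refine ⟨?_, fun h => ?_⟩
  · rintro ⟨γ, rfl⟩ i -
    exact dvd_mul_right _ _
  · refine ⟨Finsupp.onFinset α.support (fun i => α i / 2 ^ (m + 1 - i)) fun i hi =>
      Finsupp.mem_support_iff.mpr fun h0 => hi (by simp [h0]), ?_⟩
    ext i
    rw [scale_apply, Finsupp.onFinset_apply]
    rcases le_or_gt i m with hi | hi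
    · exact Nat.mul_div_cancel' (h i hi)
    · simp [Nat.sub_eq_zero_of_le hi]

/-- Truncated subtraction: every part `2 ^ i` with `i ≤ m + 1` has reduced weight `1`. -/
def reducedWeight (γ : ℕ →₀ ℕ) : ℕ := γ.sum fun i a => a * 2 ^ (i - (m + 1))

lemma binWeight_scale (γ : ℕ →₀ ℕ) :
    binWeight (scale m γ) = 2 ^ (m + 1) * reducedWeight m γ := by
  rw [binWeight, scale, Finsupp.onFinset_sum _ fun _ => zero_mul _, reducedWeight,
    Finsupp.sum, mul_sum]
  refine sum_congr rfl fun i _ => ?_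
  rw [mul_right_comm, ← pow_add, mul_left_comm, ← pow_add, mul_comm]
  congr 2
  omega

lemma Pm_two_pow_mul (k : ℕ) :
    Pm m (2 ^ (m + 1) * k) = scale m '' {γ | reducedWeight m γ = k} := by
  ext α
  constructor
  · rintro ⟨hw, hdvd⟩
    obtain ⟨γ, rfl⟩ := (mem_range_scale_iff m α).mpr hdvd
    refine ⟨γ, ?_, rfl⟩
    rw [binWeight_scale] at hw
    exact Nat.eq_of_mul_eq_mul_left (Nat.two_pow_pos _) (by exact_mod_cast hw)
  · rintro ⟨γ, hγ, rfl⟩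
    exact ⟨by rw [binWeight_scale, hγ]; push_cast; rfl,
      (mem_range_scale_iff m _).mp ⟨γ, rfl⟩⟩

lemma r_two_pow_mul (k : ℕ) :
    r m (2 ^ (m + 1) * k) = Nat.card {γ | reducedWeight m γ = k} := by
  rw [r, Pm_two_pow_mul, Nat.card_image_of_injective (scale_injective m)]

lemma reducedWeight_single (i a : ℕ) :
    reducedWeight m (Finsupp.single i a) = a * 2 ^ (i - (m + 1)) :=
  Finsupp.sum_single_index (zero_mul _)

lemma reducedWeight_of_support_subset {γ : ℕ →₀ ℕ} (hγ : γ.support ⊆ range (m + 2)) :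
    reducedWeight m γ = γ.sum fun _ a => a :=
  Finsupp.sum_congr fun i hi => by
    rw [Nat.sub_eq_zero_of_le (Nat.lt_succ_iff.mp (mem_range.mp (hγ hi))), pow_zero, mul_one]

lemma eq_single_of_reducedWeight_eq_two {γ : ℕ →₀ ℕ} (hγ : reducedWeight m γ = 2)
    {i : ℕ} (hi : i ∈ γ.support) (him : m + 2 ≤ i) : γ = Finsupp.single (m + 2) 1 := by
  have hsplit : γ i * 2 ^ (i - (m + 1)) +
      ∑ j ∈ γ.support.erase i, γ j * 2 ^ (j - (m + 1)) = 2 :=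
    (add_sum_erase _ (fun j => γ j * 2 ^ (j - (m + 1))) hi).trans hγ
  have hγi : 1 ≤ γ i := Nat.one_le_iff_ne_zero.mpr (Finsupp.mem_support_iff.mp hi)
  have hpow : 2 ≤ 2 ^ (i - (m + 1)) := Nat.le_self_pow (by omega) 2
  have hterm : γ i * 2 ^ (i - (m + 1)) = 2 := by
    have := Nat.mul_le_mul hγi hpow
    omega
  have hsupp : γ.support = {i} := by
    refine eq_singleton_iff_unique_mem.mpr ⟨hi, fun j hj => by_contra fun hji => ?_⟩
    have hrest := sum_eq_zero_iff.mp (by omega : ∑ j ∈ γ.support.erase i,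
      γ j * 2 ^ (j - (m + 1)) = 0) j (mem_erase.mpr ⟨hji, hj⟩)
    simp only [mul_eq_zero, pow_eq_zero_iff', OfNat.ofNat_ne_zero, false_and, or_false] at hrest
    exact Finsupp.mem_support_iff.mp hj hrest
  have hγi1 : γ i = 1 := by nlinarith
  have him2 : i = m + 2 := by
    have : 2 ^ (i - (m + 1)) = 2 ^ 1 := by simpa [hγi1] using hterm
    have := Nat.pow_right_injective le_rfl this
    omega
  rw [(Finsupp.support_eq_singleton.mp hsupp).2, hγi1, him2]

lemma reducedWeight_eq_two_iff (γ : ℕ →₀ ℕ) :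
    reducedWeight m γ = 2 ↔
      γ = Finsupp.single (m + 2) 1 ∨ γ ∈ (range (m + 2)).finsuppAntidiag 2 := by
  refine ⟨fun hγ => ?_, ?_⟩
  · by_cases hs : γ.support ⊆ range (m + 2)
    · exact .inr (mem_finsuppAntidiag'.mpr ⟨reducedWeight_of_support_subset m hs ▸ hγ, hs⟩)
    · obtain ⟨i, hi, him⟩ := not_subset.mp hs
      exact .inl (eq_single_of_reducedWeight_eq_two m hγ hi (by simpa using him))
  · rintro (rfl | hγ)
    · simp [reducedWeight_single]
    · rw [mem_finsuppAntidiag'] at hγ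
      rw [reducedWeight_of_support_subset m hγ.2, hγ.1]

lemma card_reducedWeight_eq_two :
    Nat.card {γ | reducedWeight m γ = 2} = (m + 3).choose 2 + 1 := by
  have hset : {γ | reducedWeight m γ = 2} =
      ↑(insert (Finsupp.single (m + 2) 1) ((range (m + 2)).finsuppAntidiag 2)) := by
    ext γ
    simp only [Set.mem_ofPred_eq, coe_insert, Set.mem_insert_iff, mem_coe,
      reducedWeight_eq_two_iff]
  have hnotMem : Finsupp.single (m + 2) 1 ∉ (range (m + 2)).finsuppAntidiag 2 := by
    simp
  rw [hset, Nat.card_coe_set_eq, Set.ncard_coe_finset, card_insert_of_notMem hnotMem,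
    card_finsuppAntidiag_nat_eq_choose, card_range]
  rfl

end BinaryPartition

theorem stmt14 (m : ℕ) : r m (2 ^ (m + 2)) = 2 * (m + 1) + 2 + (m + 1).choose 2 := by
  have h : (2 : ℤ) ^ (m + 2) = 2 ^ (m + 1) * ((2 : ℕ) : ℤ) := by push_cast; ring
  rw [h, BinaryPartition.r_two_pow_mul, BinaryPartition.card_reducedWeight_eq_two,
    Nat.choose_succ_succ' (m + 2) 1, Nat.choose_succ_succ' (m + 1) 1]
  simp only [Nat.choose_one_right]
  ring
end
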